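/- arXiv:2102.00852 — 5 statements merged into one kernel-verified Lean document; each statement's English description precedes it below -/
import Mathlib

section
/- Let g, h, u, ψ be real numbers with g > 0, h > 0, ψ > 0 and u > 0, and let p(λ) = λ³ − 2uλ² + (u² − gh(ψ + 1))λ + u·g·h·ψ. Then p has three distinct real roots λ₁ < λ₂ < λ₃, and exactly one of them is negative and two are positive; more precisely λ₁ < 0 < λ₂ < u < λ₃. -/
/-- The characteristic cubic of the Saint-Venant-Exner system, for `g, h, ψ, u > 0`,
has three distinct real roots `λ₁ < 0 < λ₂ < u < λ₃`: one negative and two positive. -/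
theorem sve_cubic_roots (g h u ψ : ℝ) (hg : 0 < g) (hh : 0 < h) (hψ : 0 < ψ) (hu : 0 < u) :
    ∃ l₁ l₂ l₃ : ℝ,
      (∀ x : ℝ,
        x ^ 3 - 2 * u * x ^ 2 + (u ^ 2 - g * h * (ψ + 1)) * x + u * g * h * ψ = 0 ↔
        (x = l₁ ∨ x = l₂ ∨ x = l₃)) ∧
      l₁ < 0 ∧ 0 < l₂ ∧ l₂ < u ∧ u < l₃ := by
  set f : ℝ → ℝ := fun x =>
    x ^ 3 - 2 * u * x ^ 2 + (u ^ 2 - g * h * (ψ + 1)) * x + u * g * h * ψ with hf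
  have hcont : Continuous f := by fun_prop
  have hf0 : 0 < f 0 := by simp only [hf]; norm_num; positivity
  have hfu : f u < 0 := by
    have h1 : f u = -(g * h * u) := by simp only [hf]; ring
    rw [h1, neg_lt, neg_zero]; positivity
  set M : ℝ := 2 * u + g * h * (ψ + 1) + 1 with hM
  have hMu : u < M := by nlinarith [mul_pos (mul_pos hg hh) hψ, mul_pos hg hh]
  have hfM : 0 < f M := by
    simp only [hf, hM]
    nlinarith [mul_pos (mul_pos hg hh) hψ, mul_pos hg hh, mul_pos hu hu, sq_nonneg u,
      mul_pos (mul_pos hu hg) (mul_pos hh hψ), sq_nonneg (g*h*(ψ+1)), sq_nonneg (u + g*h*(ψ+1))]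
  set N : ℝ := g * h * (ψ + 1) + u * g * h * ψ + 1 with hN
  have hN0 : 0 < N := by positivity
  have hfN : f (-N) < 0 := by
    simp only [hf, hN]
    nlinarith [mul_pos (mul_pos hg hh) hψ, mul_pos hg hh, mul_pos hu hu,
      mul_pos (mul_pos hu hg) (mul_pos hh hψ), sq_nonneg (g*h*(ψ+1) + u*g*h*ψ),
      mul_pos (mul_pos hu hu) hu]
  -- root in (-N, 0)
  obtain ⟨l₁, hl₁mem, hl₁⟩ := intermediate_value_Ioo (le_of_lt (neg_lt_of_neg_lt (by linarith)))
    hcont.continuousOn (show (0:ℝ) ∈ Set.Ioo (f (-N)) (f 0) from ⟨hfN, hf0⟩)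
  obtain ⟨l₂, hl₂mem, hl₂⟩ := intermediate_value_Ioo' (le_of_lt hu)
    hcont.continuousOn (show (0:ℝ) ∈ Set.Ioo (f u) (f 0) from ⟨hfu, hf0⟩)
  obtain ⟨l₃, hl₃mem, hl₃⟩ := intermediate_value_Ioo (le_of_lt hMu)
    hcont.continuousOn (show (0:ℝ) ∈ Set.Ioo (f u) (f M) from ⟨hfu, hfM⟩)
  have h1neg : l₁ < 0 := hl₁mem.2
  have h2pos : 0 < l₂ := hl₂mem.1
  have h2u : l₂ < u := hl₂mem.2
  have h3u : u < l₃ := hl₃mem.1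
  have d12 : l₁ - l₂ ≠ 0 := sub_ne_zero.mpr (by linarith)
  have d23 : l₂ - l₃ ≠ 0 := sub_ne_zero.mpr (by linarith)
  have d13 : l₁ - l₃ ≠ 0 := sub_ne_zero.mpr (by linarith)
  simp only [hf] at hl₁ hl₂ hl₃
  -- Vieta
  have eA : l₁ ^ 2 + l₁ * l₂ + l₂ ^ 2 - 2 * u * (l₁ + l₂) + (u ^ 2 - g * h * (ψ + 1)) = 0 := by
    have h0 : (l₁ - l₂) * (l₁ ^ 2 + l₁ * l₂ + l₂ ^ 2 - 2 * u * (l₁ + l₂)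
        + (u ^ 2 - g * h * (ψ + 1))) = 0 := by linear_combination hl₁ - hl₂
    exact (mul_eq_zero.mp h0).resolve_left d12
  have eB : l₂ ^ 2 + l₂ * l₃ + l₃ ^ 2 - 2 * u * (l₂ + l₃) + (u ^ 2 - g * h * (ψ + 1)) = 0 := by
    have h0 : (l₂ - l₃) * (l₂ ^ 2 + l₂ * l₃ + l₃ ^ 2 - 2 * u * (l₂ + l₃)
        + (u ^ 2 - g * h * (ψ + 1))) = 0 := by linear_combination hl₂ - hl₃
    exact (mul_eq_zero.mp h0).resolve_left d23
  have ha : l₁ + l₂ + l₃ = 2 * u := by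
    have h0 : (l₁ - l₃) * (l₁ + l₂ + l₃ - 2 * u) = 0 := by linear_combination eA - eB
    have := (mul_eq_zero.mp h0).resolve_left d13
    linarith
  have hb : l₁ * l₂ + l₁ * l₃ + l₂ * l₃ = u ^ 2 - g * h * (ψ + 1) := by
    linear_combination -eA + (l₁ + l₂) * ha
  have hc : l₁ * l₂ * l₃ = -(u * g * h * ψ) := by
    linear_combination hl₁ - l₁ ^ 2 * ha + l₁ * hb
  refine ⟨l₁, l₂, l₃, fun x => ?_, h1neg, h2pos, h2u, h3u⟩
  have key : x ^ 3 - 2 * u * x ^ 2 + (u ^ 2 - g * h * (ψ + 1)) * x + u * g * h * ψ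
      = (x - l₁) * ((x - l₂) * (x - l₃)) := by
    linear_combination x ^ 2 * ha - x * hb + hc
  rw [key]
  simp [mul_eq_zero, sub_eq_zero]
end

section
/- Let u, ψ be nonzero real numbers and let J⁽ᵃ⁾ = [[0, 0, 0], [−u², 2u, 0], [−uψ, ψ, 0]]. Then the vector (0, 0, 1) is an eigenvector of J⁽ᵃ⁾ with eigenvalue 0, and J⁽ᵃ⁾ is not diagonalizable over ℝ: the span of all real eigenvectors of J⁽ᵃ⁾ is a proper subspace of ℝ³ of dimension 2, so the advection system is only weakly hyperbolic. -/
/-!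
Every real eigenvector `(h, q, η)` of `J⁽ᵃ⁾` has `h = 0`: for an eigenvalue `μ ≠ 0` the first
row gives `μ h = 0`, and for `μ = 0` the third row forces `q = u h`, after which the second
gives `u² h = 0`. The eigenvectors `(0, 0, 1)` and `(0, 2u, ψ)` span the plane `h = 0`, so the
eigenvectors span exactly that plane. A diagonalization `S D S⁻¹` is impossible, since the
columns of `S` would be eigenvectors spanning all of `ℝ³`.
-/

open Module Submodule Matrix

def Matrix.eigenvectors {K n : Type*} [CommRing K] [Fintype n] (A : Matrix n n K) :
    Set (n → K) :=
  {v | v ≠ 0 ∧ ∃ μ : K, A *ᵥ v = μ • v}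

theorem Matrix.span_eigenvectors_eq_top_of_eq_mul_mul_inv {K n : Type*} [CommRing K]
    [Nontrivial K] [Fintype n] [DecidableEq n] {A S D : Matrix n n K} (hS : IsUnit S)
    (hD : D.IsDiag) (hA : A = S * D * S⁻¹) :
    span K A.eigenvectors = ⊤ := by
  have hAS : A * S = S * D := by
    rw [hA, Matrix.mul_assoc, Matrix.mul_assoc,
      nonsing_inv_mul S ((isUnit_iff_isUnit_det S).mp hS), Matrix.mul_one]
  have hcol : ∀ j, A *ᵥ S.col j = D j j • S.col j := by
    intro j
    ext i
    have := congrFun₂ hAS i j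
    rw [← hD.diagonal_diag, mul_diagonal] at this
    simpa [mulVec, dotProduct, mul_apply, mul_comm] using this
  have hcols : span K (Set.range S.col) = ⊤ := by
    rw [← range_mulVecLin, LinearMap.range_eq_top]
    exact mulVec_surjective_iff_isUnit.mpr hS
  refine eq_top_iff.mpr (hcols.ge.trans (span_mono ?_))
  rintro _ ⟨j, rfl⟩
  exact ⟨(linearIndependent_cols_of_isUnit hS).ne_zero j, D j j, hcol j⟩

theorem finrank_ker_proj_add_one {K n : Type*} [Field K] [Fintype n] (i : n) :
    finrank K (LinearMap.ker (LinearMap.proj i : (n → K) →ₗ[K] K)) + 1 = Fintype.card n := by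
  classical
  have hproj : (LinearMap.proj i : Dual K (n → K)) ≠ 0 := fun h => by
    simpa using LinearMap.congr_fun h (Pi.single i 1)
  simpa using Dual.finrank_ker_add_one_of_ne_zero hproj

def advectionJacobian (u ψ : ℝ) : Matrix (Fin 3) (Fin 3) ℝ :=
  !![0, 0, 0; -u ^ 2, 2 * u, 0; -u * ψ, ψ, 0]

theorem advectionJacobian_mulVec (u ψ : ℝ) (v : Fin 3 → ℝ) :
    advectionJacobian u ψ *ᵥ v = ![0, u * (2 * v 1 - u * v 0), ψ * (v 1 - u * v 0)] := by
  ext i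
  fin_cases i <;> simp [advectionJacobian, mulVec, dotProduct, Fin.sum_univ_three] <;> ring

theorem advectionJacobian_mulVec_bed (u ψ : ℝ) :
    advectionJacobian u ψ *ᵥ ![0, 0, 1] = (0 : ℝ) • ![0, 0, 1] := by
  rw [advectionJacobian_mulVec]
  ext i
  fin_cases i <;> simp

theorem advectionJacobian_mulVec_flow (u ψ : ℝ) :
    advectionJacobian u ψ *ᵥ ![0, 2 * u, ψ] = (2 * u) • ![0, 2 * u, ψ] := by
  rw [advectionJacobian_mulVec]
  ext i
  fin_cases i <;> simp <;> ring

theorem advectionJacobian_eigenvector_apply_zero {u ψ : ℝ} (hu : u ≠ 0) (hψ : ψ ≠ 0)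
    {v : Fin 3 → ℝ} {μ : ℝ} (h : advectionJacobian u ψ *ᵥ v = μ • v) : v 0 = 0 := by
  rw [advectionJacobian_mulVec] at h
  have h0 : 0 = μ * v 0 := by simpa using congrFun h 0
  have h1 : u * (2 * v 1 - u * v 0) = μ * v 1 := by simpa using congrFun h 1
  have h2 : ψ * (v 1 - u * v 0) = μ * v 2 := by simpa using congrFun h 2
  rcases eq_or_ne μ 0 with rfl | hμ
  · have hv1 : v 1 = u * v 0 := by
      linear_combination (mul_eq_zero.mp (h2.trans (zero_mul _))).resolve_left hψ
    have : u ^ 2 * v 0 = 0 := by linear_combination h1 - 2 * u * hv1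
    exact (mul_eq_zero.mp this).resolve_left (pow_ne_zero 2 hu)
  · exact (mul_eq_zero.mp h0.symm).resolve_left hμ

theorem span_advectionJacobian_eigenvectors {u ψ : ℝ} (hu : u ≠ 0) (hψ : ψ ≠ 0) :
    span ℝ (advectionJacobian u ψ).eigenvectors =
      LinearMap.ker (LinearMap.proj 0 : (Fin 3 → ℝ) →ₗ[ℝ] ℝ) := by
  refine le_antisymm (span_le.mpr ?_) fun v (hv : v 0 = 0) => ?_
  · rintro v ⟨-, μ, hv⟩
    exact advectionJacobian_eigenvector_apply_zero hu hψ hv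
  have hflow : ![0, 2 * u, ψ] ∈ span ℝ (advectionJacobian u ψ).eigenvectors :=
    subset_span ⟨fun h => hψ (by simpa using congrFun h 2), 2 * u,
      advectionJacobian_mulVec_flow u ψ⟩
  have hbed : ![0, 0, 1] ∈ span ℝ (advectionJacobian u ψ).eigenvectors :=
    subset_span ⟨fun h => by simpa using congrFun h 2, 0, advectionJacobian_mulVec_bed u ψ⟩
  have hv : v = (v 1 / (2 * u)) • ![0, 2 * u, ψ] + (v 2 - ψ * v 1 / (2 * u)) • ![0, 0, 1] := by
    ext i
    fin_cases i <;> simp [hv, field]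
  rw [hv]
  exact add_mem (smul_mem _ _ hflow) (smul_mem _ _ hbed)

/-- The advection Jacobian `J⁽ᵃ⁾ = [[0,0,0],[−u²,2u,0],[−uψ,ψ,0]]` (with `u ≠ 0`,
`ψ ≠ 0`) has `(0,0,1)` as an eigenvector with eigenvalue `0`, is not diagonalizable
over `ℝ`, and the span of all of its real eigenvectors is a proper subspace of `ℝ³`
of dimension `2` (weak hyperbolicity). -/
theorem advection_weakly_hyperbolic (u ψ : ℝ) (hu : u ≠ 0) (hψ : ψ ≠ 0) :
    ((!![0, 0, 0; -u ^ 2, 2 * u, 0; -u * ψ, ψ, 0] : Matrix (Fin 3) (Fin 3) ℝ).mulVec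
        ![0, 0, 1] = (0 : ℝ) • ![0, 0, 1] ∧ (![0, 0, 1] : Fin 3 → ℝ) ≠ 0) ∧
    (¬ ∃ S D : Matrix (Fin 3) (Fin 3) ℝ, IsUnit S ∧ D.IsDiag ∧
        (!![0, 0, 0; -u ^ 2, 2 * u, 0; -u * ψ, ψ, 0] : Matrix (Fin 3) (Fin 3) ℝ) =
          S * D * S⁻¹) ∧
    (Submodule.span ℝ {v : Fin 3 → ℝ | v ≠ 0 ∧ ∃ μ : ℝ,
        (!![0, 0, 0; -u ^ 2, 2 * u, 0; -u * ψ, ψ, 0] : Matrix (Fin 3) (Fin 3) ℝ).mulVec v =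
          μ • v} ≠ ⊤) ∧
    Module.finrank ℝ
      (Submodule.span ℝ {v : Fin 3 → ℝ | v ≠ 0 ∧ ∃ μ : ℝ,
        (!![0, 0, 0; -u ^ 2, 2 * u, 0; -u * ψ, ψ, 0] : Matrix (Fin 3) (Fin 3) ℝ).mulVec v =
          μ • v}) = 2 := by
  have hrank : finrank ℝ (span ℝ (advectionJacobian u ψ).eigenvectors) = 2 := by
    have := finrank_ker_proj_add_one (K := ℝ) (0 : Fin 3)
    rw [span_advectionJacobian_eigenvectors hu hψ]
    simpa using this
  have hne_top : span ℝ (advectionJacobian u ψ).eigenvectors ≠ ⊤ := fun h => by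
    rw [h, finrank_top] at hrank
    simp at hrank
  refine ⟨⟨advectionJacobian_mulVec_bed u ψ, fun h => by simpa using congrFun h 2⟩, ?_,
    hne_top, hrank⟩
  rintro ⟨S, D, hS, hD, hA⟩
  exact hne_top (span_eigenvectors_eq_top_of_eq_mul_mul_inv hS hD hA)
end

section
/- Let K and Δη be real numbers. There exists a pair (a, b) of nonnegative real numbers satisfying a^{3/2} + b^{3/2} = K and a − b = Δη if and only if K ≥ |Δη|^{3/2}; moreover, when it exists, this pair is unique. -/
/-- Solvability of the star-region depth system: a pair of nonnegative reals `(a, b)`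
with `a^{3/2} + b^{3/2} = K` and `a − b = Δη` exists iff `K ≥ |Δη|^{3/2}`, and when it
exists it is unique. -/
theorem star_depths_exist_unique (K Δη : ℝ) :
    ((∃ a b : ℝ, 0 ≤ a ∧ 0 ≤ b ∧ a ^ ((3 : ℝ) / 2) + b ^ ((3 : ℝ) / 2) = K ∧ a - b = Δη) ↔
      |Δη| ^ ((3 : ℝ) / 2) ≤ K) ∧
    (∀ a b a' b' : ℝ, 0 ≤ a → 0 ≤ b → 0 ≤ a' → 0 ≤ b' →
      a ^ ((3 : ℝ) / 2) + b ^ ((3 : ℝ) / 2) = K → a - b = Δη →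
      a' ^ ((3 : ℝ) / 2) + b' ^ ((3 : ℝ) / 2) = K → a' - b' = Δη →
      a = a' ∧ b = b') := by
  constructor
  · constructor
    · rintro ⟨a, b, ha, hb, hK, hd⟩
      rcases le_total b a with h | h
      · have h1 : |Δη| ≤ a := by
          rw [← hd, abs_of_nonneg (by linarith)]; linarith
        have h2 := Real.rpow_le_rpow (abs_nonneg _) h1 (by norm_num : (0:ℝ) ≤ 3/2)
        have hbp := Real.rpow_nonneg hb ((3:ℝ)/2)
        linarith
      · have h1 : |Δη| ≤ b := by
          rw [← hd, abs_of_nonpos (by linarith)]; linarith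
        have h2 := Real.rpow_le_rpow (abs_nonneg _) h1 (by norm_num : (0:ℝ) ≤ 3/2)
        have hap := Real.rpow_nonneg ha ((3:ℝ)/2)
        linarith
    · intro hKge
      set f : ℝ → ℝ := fun b => (b + Δη) ^ ((3:ℝ)/2) + b ^ ((3:ℝ)/2) with hf
      set m : ℝ := max 0 (-Δη) with hm
      set M : ℝ := max m (max K 1) with hM
      have hmM : m ≤ M := le_max_left _ _
      have h32 : Continuous fun x : ℝ => x ^ ((3:ℝ)/2) := by
        rw [continuous_iff_continuousAt]
        intro x
        exact Real.continuousAt_rpow_const x _ (Or.inr (by norm_num))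
      have hcont : ContinuousOn f (Set.Icc m M) :=
        ((h32.comp (continuous_id.add continuous_const)).add h32).continuousOn
      have hfm : f m = |Δη| ^ ((3:ℝ)/2) := by
        rcases le_total 0 Δη with h | h
        · have : m = 0 := by simp [hm, max_eq_left, neg_nonpos.mpr h]
          rw [this]
          simp [hf, Real.zero_rpow (by norm_num : (3:ℝ)/2 ≠ 0), abs_of_nonneg h]
        · have : m = -Δη := by simp [hm, max_eq_right, neg_nonneg.mpr h]
          rw [this]
          simp [hf, Real.zero_rpow (by norm_num : (3:ℝ)/2 ≠ 0), abs_of_nonpos h]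
      have hfM : K ≤ f M := by
        have hM1 : (1:ℝ) ≤ M := le_trans (le_max_right _ _) (le_max_right _ _)
        have hMK : K ≤ M := le_trans (le_max_left _ _) (le_max_right _ _)
        have h1 : M ^ (1:ℝ) ≤ M ^ ((3:ℝ)/2) :=
          Real.rpow_le_rpow_of_exponent_le hM1 (by norm_num)
        rw [Real.rpow_one] at h1
        have hMd : 0 ≤ M + Δη := by
          have : -Δη ≤ m := le_max_right _ _
          linarith [hmM]
        have h2 : (0:ℝ) ≤ (M + Δη) ^ ((3:ℝ)/2) := Real.rpow_nonneg hMd _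
        simp only [hf]
        linarith
      have hKmem : K ∈ Set.Icc (f m) (f M) := ⟨hfm ▸ hKge, hfM⟩
      obtain ⟨b, hbmem, hfb⟩ := intermediate_value_Icc hmM hcont hKmem
      refine ⟨b + Δη, b, ?_, ?_, ?_, by ring⟩
      · have : -Δη ≤ m := le_max_right _ _
        linarith [hbmem.1]
      · have : (0:ℝ) ≤ m := le_max_left _ _
        linarith [hbmem.1]
      · simpa [hf] using hfb
  · intro a b a' b' ha hb ha' hb' hK hd hK' hd'
    have key : b = b' := by
      by_contra hne
      rcases lt_or_gt_of_ne hne with h | h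
      · have haa : a < a' := by linarith
        have h1 : a ^ ((3:ℝ)/2) < a' ^ ((3:ℝ)/2) :=
          Real.rpow_lt_rpow ha haa (by norm_num)
        have h2 : b ^ ((3:ℝ)/2) < b' ^ ((3:ℝ)/2) :=
          Real.rpow_lt_rpow hb h (by norm_num)
        linarith
      · have haa : a' < a := by linarith
        have h1 : a' ^ ((3:ℝ)/2) < a ^ ((3:ℝ)/2) :=
          Real.rpow_lt_rpow ha' haa (by norm_num)
        have h2 : b' ^ ((3:ℝ)/2) < b ^ ((3:ℝ)/2) :=
          Real.rpow_lt_rpow hb' h (by norm_num)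
        linarith
    exact ⟨by linarith, key⟩
end

section
/- Let g > 0 and let h_L, h_R be nonnegative reals and η_L, η_R reals such that q_L = q_R = 0 and h_L + η_L = h_R + η_R (lake at rest). Set K = (3/(2√g))(q_L − q_R) + h_L^{3/2} + h_R^{3/2} and Δη = η_R − η_L. Then the triple (h_{*L}, h_{*R}, q_*) = (h_L, h_R, 0) satisfies the star-region system: h_{*L}^{3/2} + h_{*R}^{3/2} = K, h_{*L} − h_{*R} = Δη, and q_* = ½(q_L + q_R) + (√g/3)(h_L^{3/2} − h_R^{3/2} − h_{*L}^{3/2} + h_{*R}^{3/2}) = 0. -/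
/-- Well-balancedness (C-property) at the level of the star states: for lake-at-rest
data (`q_L = q_R = 0`, `h_L + η_L = h_R + η_R`), the triple
`(h_{*L}, h_{*R}, q_*) = (h_L, h_R, 0)` solves the star-region system. -/
theorem lake_at_rest_star_states (g : ℝ) (hg : 0 < g) (hL hR ηL ηR qL qR : ℝ)
    (hhL : 0 ≤ hL) (hhR : 0 ≤ hR)
    (hqL : qL = 0) (hqR : qR = 0) (hlake : hL + ηL = hR + ηR) :
    hL ^ ((3 : ℝ) / 2) + hR ^ ((3 : ℝ) / 2) =
      (3 / (2 * Real.sqrt g)) * (qL - qR) + hL ^ ((3 : ℝ) / 2) + hR ^ ((3 : ℝ) / 2) ∧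
    hL - hR = ηR - ηL ∧
    (1 / 2) * (qL + qR) + (Real.sqrt g / 3) *
      (hL ^ ((3 : ℝ) / 2) - hR ^ ((3 : ℝ) / 2) - hL ^ ((3 : ℝ) / 2) + hR ^ ((3 : ℝ) / 2)) = 0 := by
  subst hqL hqR
  refine ⟨by ring, by linarith, by ring⟩
end

section
/- Let g and h̄ be real numbers, let P̄ = [[0, 1, 0], [g·h̄, 0, g·h̄], [0, 0, 0]], and let ΔQ = (Δh, 0, Δη) be a vector whose second component is zero and which satisfies Δh + Δη = 0. Then P̄ · ΔQ = 0. Consequently, for lake-at-rest Riemann data (q_L = q_R = 0, h_L + η_L = h_R + η_R), both fluctuations D⁻ = P̄ · (Q_{*R} − Q_L) and D⁺ = P̄ · (Q_R − Q_{*L}) of the path-conservative scheme vanish, where Q_L = (h_L, 0, η_L), Q_R = (h_R, 0, η_R), Q_{*L} = (h_L, 0, η_L), Q_{*R} = (h_R, 0, η_R). -/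
/-! The middle row of `P̄` is `g h̄ (1, 0, 1)`, so `P̄ ΔQ = (Δq, g h̄ (Δh + Δη), 0)` only sees
the jump of the discharge and of the free surface `h + η`; both vanish for a lake at rest. -/

open Matrix

section PressureMatrix

variable {R : Type*}

theorem pressureMatrix_mulVec [NonAssocSemiring R] (a x q y : R) :
    !![0, 1, 0; a, 0, a; 0, 0, 0] *ᵥ ![x, q, y] = ![q, a * (x + y), 0] := by
  ext i
  fin_cases i <;> simp [mulVec, dotProduct, Fin.sum_univ_succ, mul_add]

theorem pressureMatrix_mulVec_eq_zero [NonAssocSemiring R] (a : R) {x y : R}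
    (hxy : x + y = 0) : !![0, 1, 0; a, 0, a; 0, 0, 0] *ᵥ ![x, 0, y] = 0 := by
  rw [pressureMatrix_mulVec, hxy, mul_zero]
  ext i
  fin_cases i <;> rfl

theorem pressureMatrix_mulVec_sub_eq_zero [NonAssocRing R] (a : R) {hL hR ηL ηR : R}
    (hrest : hL + ηL = hR + ηR) :
    !![0, 1, 0; a, 0, a; 0, 0, 0] *ᵥ (![hR, 0, ηR] - ![hL, 0, ηL]) = 0 := by
  have hjump : ![hR, 0, ηR] - ![hL, 0, ηL] = ![hR - hL, 0, ηR - ηL] := by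
    simp only [cons_sub_cons, sub_zero, empty_sub_empty]
  rw [hjump]
  exact pressureMatrix_mulVec_eq_zero a (by rw [sub_add_sub_comm, hrest, sub_self])

end PressureMatrix

/-- The averaged pressure matrix annihilates lake-at-rest jumps: if `ΔQ = (Δh, 0, Δη)`
with `Δh + Δη = 0` then `P̄·ΔQ = 0`; consequently both fluctuations `D⁻ = P̄·(Q_{*R} − Q_L)`
and `D⁺ = P̄·(Q_R − Q_{*L})` vanish for lake-at-rest Riemann data. -/
theorem lake_at_rest_fluctuations_vanish (g hbar : ℝ) :
    (∀ Δh Δη : ℝ, Δh + Δη = 0 →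
      (!![0, 1, 0; g * hbar, 0, g * hbar; 0, 0, 0] : Matrix (Fin 3) (Fin 3) ℝ).mulVec
        ![Δh, 0, Δη] = 0) ∧
    (∀ hL hR ηL ηR : ℝ, hL + ηL = hR + ηR →
      (!![0, 1, 0; g * hbar, 0, g * hbar; 0, 0, 0] : Matrix (Fin 3) (Fin 3) ℝ).mulVec
        ((![hR, 0, ηR] : Fin 3 → ℝ) - ![hL, 0, ηL]) = 0 ∧
      (!![0, 1, 0; g * hbar, 0, g * hbar; 0, 0, 0] : Matrix (Fin 3) (Fin 3) ℝ).mulVec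
        ((![hR, 0, ηR] : Fin 3 → ℝ) - ![hL, 0, ηL]) = 0) :=
  ⟨fun _ _ hΔ => pressureMatrix_mulVec_eq_zero _ hΔ,
    fun _ _ _ _ hrest =>
      ⟨pressureMatrix_mulVec_sub_eq_zero _ hrest, pressureMatrix_mulVec_sub_eq_zero _ hrest⟩⟩
end
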